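/- Two ¬-free weight constraint programs are strongly equivalent if and only if they have the same positive SE-models (SE-models in which only atoms appear). -/

import Mathlib

open scoped Classical

inductive Lit where
  | pos : ℕ → Lit
  | neg : ℕ → Lit
deriving DecidableEq

/-- A set of literals is consistent if it contains no complementary pair. -/
def Consistent (X : Set Lit) : Prop :=
  ∀ a : ℕ, ¬ (Lit.pos a ∈ X ∧ Lit.neg a ∈ X)

/-- A rule element: a literal or a literal prefixed with `not`. -/
inductive RElem where
  | pos : Lit → RElem
  | neg : Lit → RElem
deriving DecidableEq

def SatRE (X : Set Lit) : RElem → Prop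
  | RElem.pos l => l ∈ X
  | RElem.neg l => l ∉ X

/-- The literal of a rule element. -/
def reLit : RElem → Lit
  | RElem.pos l => l
  | RElem.neg l => l

/-- A weight constraint L ≤ S ≤ U, where S is a (multi)set of weight assignments
e = w (rule element, weight) and L, U are reals or ±∞. -/
structure WC where
  lb : EReal
  S : Multiset (RElem × ℝ)
  ub : EReal

/-- v(S,X): the sum of the weights of the assignments whose rule element X satisfies. -/
noncomputable def wval (X : Set Lit) (S : Multiset (RElem × ℝ)) : ℝ :=
  ((S.filter fun p => SatRE X p.1).map Prod.snd).sum

def SatWC (X : Set Lit) (C : WC) : Prop :=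
  C.lb ≤ (wval X C.S : EReal) ∧ (wval X C.S : EReal) ≤ C.ub

/-- A WCP rule C0 ← C1,...,Cn. -/
structure WRule where
  head : WC
  body : List WC

abbrev WProg := Set WRule

def isPosRE (p : RElem × ℝ) : Prop := ∃ l : Lit, p.1 = RElem.pos l

/-- In a weight constraint program, heads contain no negative rule elements. -/
def HeadPos (P : WProg) : Prop := ∀ r ∈ P, ∀ p ∈ r.head.S, isPosRE p

def SatWRule (X : Set Lit) (r : WRule) : Prop :=
  (∀ C ∈ r.body, SatWC X C) → SatWC X r.head

def SatWProg (X : Set Lit) (P : WProg) : Prop := ∀ r ∈ P, SatWRule X r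

/-- The reduct (L ≤ S)^X = L − v(S∖S', X) ≤ S', where S' is the positive part of S. -/
noncomputable def RedLS (X : Set Lit) (C : WC) : WC :=
  ⟨C.lb - (wval X (C.S.filter fun p => ¬ isPosRE p) : EReal),
    C.S.filter isPosRE, ⊤⟩

/-- The weight constraint 1 ≤ {l = 1}, representing the literal l. -/
noncomputable def litWC (l : Lit) : WC := ⟨(1 : EReal), {(RElem.pos l, (1 : ℝ))}, ⊤⟩

/-- The weight constraint 1 ≤ {not l = 1}, representing `not l`. -/
noncomputable def notWC (l : Lit) : WC := ⟨(1 : EReal), {(RElem.neg l, (1 : ℝ))}, ⊤⟩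

/-- ⊥, i.e. the weight constraint 1 ≤ {}. -/
noncomputable def botWC : WC := ⟨(1 : EReal), 0, ⊤⟩

/-- The reduct of a WCP rule with respect to X: all rules e ← (L1 ≤ S1)^X,...,(Ln ≤ Sn)^X
for head literals e with X ⊨ e and X ⊨ Si ≤ Ui for all i. -/
noncomputable def WReductRule (X : Set Lit) (r : WRule) : WProg :=
  {r' | ∃ l : Lit, (∃ w : ℝ, (RElem.pos l, w) ∈ r.head.S) ∧ l ∈ X ∧
    (∀ C ∈ r.body, (wval X C.S : EReal) ≤ C.ub) ∧
    r' = ⟨litWC l, r.body.map (RedLS X)⟩}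

noncomputable def WReductProg (X : Set Lit) (P : WProg) : WProg :=
  {r' | ∃ r ∈ P, r' ∈ WReductRule X r}

/-- X is an answer set for P if X ⊨ P and no proper subset of X satisfies P^X. -/
def AnswerSetW (X : Set Lit) (P : WProg) : Prop :=
  Consistent X ∧ SatWProg X P ∧
    ∀ Z : Set Lit, Z ⊂ X → ¬ SatWProg Z (WReductProg X P)

def SEModelW (P : WProg) (X Y : Set Lit) : Prop :=
  Consistent X ∧ Consistent Y ∧ X ⊆ Y ∧ SatWProg Y P ∧ SatWProg X (WReductProg Y P)

def StrongEqW (P Q : WProg) : Prop :=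
  ∀ R : WProg, HeadPos R →
    ∀ Y : Set Lit, AnswerSetW Y (P ∪ R) ↔ AnswerSetW Y (Q ∪ R)

/-- A weight constraint program is ¬-free if classical negation occurs nowhere in it. -/
def WProgNegFree (P : WProg) : Prop :=
  ∀ r ∈ P, (∀ p ∈ r.head.S, ∃ a : ℕ, reLit p.1 = Lit.pos a) ∧
    ∀ C ∈ r.body, ∀ p ∈ C.S, ∃ a : ℕ, reLit p.1 = Lit.pos a

def AtomsOnly (Z : Set Lit) : Prop := ∀ l ∈ Z, ∃ a, l = Lit.pos a

/-!
Strong equivalence coincides with equality of SE-models for arbitrary weight constraint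
programs. If the SE-models of `P` and `Q` agree, so do the answer sets of `P ∪ R` and `Q ∪ R`,
because the reduct distributes over unions. Conversely, if `(X, Y)` is an SE-model of `P` but
not of `Q`, then for the context `R = X ∪ {l ← m | l, m ∈ Y \ X}` the set `Y` is an answer set
of `Q ∪ R` (a model of `Q^Y ∪ R` strictly below `Y` must be `X`) but not of `P ∪ R`
(`X` is a model of `P^Y ∪ R`).

For ¬-free programs, satisfaction and reducts only look at the atoms of an interpretation, so
`(X, Y)` is an SE-model exactly when `X ⊆ Y` are consistent and the atoms of `X` and `Y` form
one; hence positive SE-models suffice.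
-/

lemma satWProg_union {Z : Set Lit} {P R : WProg} :
    SatWProg Z (P ∪ R) ↔ SatWProg Z P ∧ SatWProg Z R :=
  ⟨fun h => ⟨fun r hr => h r (.inl hr), fun r hr => h r (.inr hr)⟩,
    fun h r hr => hr.elim (h.1 r) (h.2 r)⟩

lemma wReductProg_union (Y : Set Lit) (P R : WProg) :
    WReductProg Y (P ∪ R) = WReductProg Y P ∪ WReductProg Y R := by
  ext r'
  simp only [WReductProg, Set.mem_ofPred_eq, Set.mem_union, or_and_right, exists_or]

lemma satWC_litWC (Z : Set Lit) (l : Lit) : SatWC Z (litWC l) ↔ l ∈ Z := by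
  by_cases h : l ∈ Z <;>
    simp only [SatWC, litWC, wval] <;> rw [Multiset.filter_singleton] <;>
    simp [SatRE, h]

lemma satWProg_wReductProg_self (Y : Set Lit) (P : WProg) : SatWProg Y (WReductProg Y P) := by
  rintro r' ⟨r, -, l, -, hlY, -, rfl⟩ -
  exact (satWC_litWC Y l).mpr hlY

lemma Consistent.mono {Z Y : Set Lit} (hY : Consistent Y) (h : Z ⊆ Y) : Consistent Z :=
  fun a hc => hY a ⟨h hc.1, h hc.2⟩

section SEModels

variable {P Q R : WProg} {X Y : Set Lit}

lemma answerSetW_union_of_seModelW_iff (hPQ : ∀ X Y, SEModelW P X Y ↔ SEModelW Q X Y)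
    (hY : AnswerSetW Y (P ∪ R)) : AnswerSetW Y (Q ∪ R) := by
  obtain ⟨hcons, hsat, hmin⟩ := hY
  rw [satWProg_union] at hsat
  have hYQ : SatWProg Y Q :=
    ((hPQ Y Y).mp ⟨hcons, hcons, subset_rfl, hsat.1, satWProg_wReductProg_self Y P⟩).2.2.2.1
  refine ⟨hcons, satWProg_union.mpr ⟨hYQ, hsat.2⟩, fun Z hZY hZ => hmin Z hZY ?_⟩
  rw [wReductProg_union, satWProg_union] at hZ ⊢
  exact ⟨((hPQ Z Y).mpr ⟨hcons.mono hZY.subset, hcons, hZY.subset, hYQ, hZ.1⟩).2.2.2.2, hZ.2⟩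

lemma strongEqW_of_seModelW_iff (hPQ : ∀ X Y, SEModelW P X Y ↔ SEModelW Q X Y) :
    StrongEqW P Q := fun _ _ _ =>
  ⟨answerSetW_union_of_seModelW_iff hPQ,
    answerSetW_union_of_seModelW_iff fun X Y => (hPQ X Y).symm⟩

end SEModels

/-- The rule `l ← m₁, …, mₖ`, each literal `e` written as the constraint `1 ≤ {e = 1}`. -/
noncomputable def defRule (l : Lit) (ms : List Lit) : WRule := ⟨litWC l, ms.map litWC⟩

lemma satWRule_defRule (Z : Set Lit) (l : Lit) (ms : List Lit) :
    SatWRule Z (defRule l ms) ↔ ((∀ m ∈ ms, m ∈ Z) → l ∈ Z) := by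
  simp [SatWRule, defRule, satWC_litWC]

lemma redLS_litWC (Y : Set Lit) (m : Lit) : RedLS Y (litWC m) = litWC m := by
  have h : isPosRE (RElem.pos m, (1 : ℝ)) := ⟨m, rfl⟩
  simp [RedLS, litWC, Multiset.filter_singleton, h, wval]

lemma wReductRule_defRule {Y : Set Lit} {l : Lit} (hl : l ∈ Y) (ms : List Lit) :
    WReductRule Y (defRule l ms) = {defRule l ms} := by
  have hhead : ∀ l', (∃ w : ℝ, (RElem.pos l', w) ∈ (litWC l).S) ↔ l' = l := by
    simp [litWC]
  have hub : ∀ m, (litWC m).ub = ⊤ := fun _ => rfl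
  ext r'
  simp [WReductRule, defRule, hhead, hl, Function.comp_def, redLS_litWC, hub]

lemma headPos_of_forall_defRule {P : WProg} (h : ∀ r ∈ P, ∃ l ms, r = defRule l ms) :
    HeadPos P := by
  intro r hr p hp
  obtain ⟨l, ms, rfl⟩ := h r hr
  simp only [defRule, litWC, Multiset.mem_singleton] at hp
  exact ⟨l, by rw [hp]⟩

lemma wReductProg_eq_self {Y : Set Lit} {P : WProg}
    (h : ∀ r ∈ P, ∃ l ∈ Y, ∃ ms, r = defRule l ms) : WReductProg Y P = P := by
  ext r'
  constructor
  · rintro ⟨r, hr, hr'⟩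
    obtain ⟨l, hl, ms, rfl⟩ := h r hr
    rw [wReductRule_defRule hl, Set.mem_singleton_iff] at hr'
    exact hr' ▸ hr
  · intro hr'
    obtain ⟨l, hl, ms, rfl⟩ := h r' hr'
    exact ⟨_, hr', by rw [wReductRule_defRule hl]; rfl⟩

def factsProg (X : Set Lit) : WProg := (fun l => defRule l []) '' X

/-- A model of these rules containing one literal of `Y \ X` contains all of them. -/
def gapProg (X Y : Set Lit) : WProg := Set.image2 (fun l m => defRule l [m]) (Y \ X) (Y \ X)

lemma satWProg_factsProg {Z X : Set Lit} : SatWProg Z (factsProg X) ↔ X ⊆ Z := by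
  simp [SatWProg, factsProg, satWRule_defRule, Set.subset_def]

lemma satWProg_gapProg {Z X Y : Set Lit} :
    SatWProg Z (gapProg X Y) ↔ ∀ l ∈ Y \ X, ∀ m ∈ Y \ X, m ∈ Z → l ∈ Z := by
  simp only [SatWProg, gapProg, Set.forall_mem_image2, satWRule_defRule, List.mem_singleton,
    forall_eq]

lemma wReductProg_factsProg {X Y : Set Lit} (h : X ⊆ Y) :
    WReductProg Y (factsProg X) = factsProg X :=
  wReductProg_eq_self fun _ ⟨l, hl, hr⟩ => ⟨l, h hl, [], hr.symm⟩

lemma wReductProg_gapProg (X Y : Set Lit) : WReductProg Y (gapProg X Y) = gapProg X Y :=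
  wReductProg_eq_self fun _ ⟨l, hl, m, _, hr⟩ => ⟨l, hl.1, [m], hr.symm⟩

lemma HeadPos.union {P R : WProg} (hP : HeadPos P) (hR : HeadPos R) : HeadPos (P ∪ R) :=
  fun r hr => hr.elim (hP r) (hR r)

lemma headPos_factsProg (X : Set Lit) : HeadPos (factsProg X) :=
  headPos_of_forall_defRule fun _ ⟨l, _, hr⟩ => ⟨l, [], hr.symm⟩

lemma headPos_gapProg (X Y : Set Lit) : HeadPos (gapProg X Y) :=
  headPos_of_forall_defRule fun _ ⟨l, _, m, _, hr⟩ => ⟨l, [m], hr.symm⟩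

section StrongEq

variable {P Q : WProg} {X Y : Set Lit}

lemma satWProg_wReductProg_union_context (hXY : X ⊆ Y) {Z : Set Lit} :
    SatWProg Z (WReductProg Y (P ∪ (factsProg X ∪ gapProg X Y))) ↔
      SatWProg Z (WReductProg Y P) ∧ X ⊆ Z ∧ ∀ l ∈ Y \ X, ∀ m ∈ Y \ X, m ∈ Z → l ∈ Z := by
  rw [wReductProg_union, wReductProg_union, wReductProg_factsProg hXY, wReductProg_gapProg,
    satWProg_union, satWProg_union, satWProg_factsProg, satWProg_gapProg]

lemma answerSetW_union_factsProg_self (hY : Consistent Y) (hYP : SatWProg Y P) :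
    AnswerSetW Y (P ∪ factsProg Y) := by
  refine ⟨hY, satWProg_union.mpr ⟨hYP, satWProg_factsProg.mpr subset_rfl⟩, fun Z hZY hZ => ?_⟩
  rw [wReductProg_union, wReductProg_factsProg subset_rfl, satWProg_union,
    satWProg_factsProg] at hZ
  exact hZY.not_subset hZ.2

/-- A model of `Q^Y` and of the context strictly below `Y` contains `X` and no literal of
`Y \ X`, so it is `X`. -/
lemma answerSetW_union_context (hY : Consistent Y) (hXY : X ⊆ Y) (hYQ : SatWProg Y Q)
    (hXQ : ¬ SatWProg X (WReductProg Y Q)) :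
    AnswerSetW Y (Q ∪ (factsProg X ∪ gapProg X Y)) := by
  refine ⟨hY, ?_, fun Z hZY hZ => ?_⟩
  · refine satWProg_union.mpr ⟨hYQ, satWProg_union.mpr ⟨?_, ?_⟩⟩
    · exact satWProg_factsProg.mpr hXY
    · exact satWProg_gapProg.mpr fun l hl _ _ _ => hl.1
  obtain ⟨hZQ, hXZ, hgap⟩ := (satWProg_wReductProg_union_context hXY).mp hZ
  by_cases hmeet : ∃ m ∈ Y \ X, m ∈ Z
  · obtain ⟨m, hm, hmZ⟩ := hmeet
    refine hZY.not_subset fun l hlY => ?_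
    by_cases hlX : l ∈ X
    · exact hXZ hlX
    · exact hgap l ⟨hlY, hlX⟩ m hm hmZ
  · have hZX : Z ⊆ X := fun l hlZ => by_contra fun hlX => hmeet ⟨l, ⟨hZY.subset hlZ, hlX⟩, hlZ⟩
    exact hXQ (Set.Subset.antisymm hZX hXZ ▸ hZQ)

lemma not_answerSetW_union_context (hXY : X ⊂ Y) (hXP : SatWProg X (WReductProg Y P)) :
    ¬ AnswerSetW Y (P ∪ (factsProg X ∪ gapProg X Y)) := fun hY =>
  hY.2.2 X hXY <| (satWProg_wReductProg_union_context hXY.subset).mpr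
    ⟨hXP, subset_rfl, fun _ _ _ hm hmX => absurd hmX hm.2⟩

lemma seModelW_of_strongEqW (hPQ : StrongEqW P Q) (h : SEModelW P X Y) : SEModelW Q X Y := by
  obtain ⟨hX, hY, hXY, hYP, hXP⟩ := h
  have hYQ : SatWProg Y Q :=
    (satWProg_union.mp ((hPQ _ (headPos_factsProg Y) Y).mp
      (answerSetW_union_factsProg_self hY hYP)).2.1).1
  refine ⟨hX, hY, hXY, hYQ, by_contra fun hXQ => ?_⟩
  have hXneY : X ≠ Y := fun hXeqY => hXQ (hXeqY ▸ satWProg_wReductProg_self X Q)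
  exact not_answerSetW_union_context (hXY.ssubset_of_ne hXneY) hXP
    ((hPQ _ ((headPos_factsProg X).union (headPos_gapProg X Y)) Y).mpr
      (answerSetW_union_context hY hXY hYQ hXQ))

theorem strongEqW_iff_seModelW_iff : StrongEqW P Q ↔ ∀ X Y, SEModelW P X Y ↔ SEModelW Q X Y :=
  ⟨fun h _ _ => ⟨seModelW_of_strongEqW h, seModelW_of_strongEqW fun R hR Y => (h R hR Y).symm⟩,
    strongEqW_of_seModelW_iff⟩

end StrongEq

def atomPart (Z : Set Lit) : Set Lit := {l ∈ Z | ∃ a, l = Lit.pos a}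

lemma atomsOnly_atomPart (Z : Set Lit) : AtomsOnly (atomPart Z) := fun _ h => h.2

lemma AtomsOnly.consistent {Z : Set Lit} (h : AtomsOnly Z) : Consistent Z := by
  rintro a ⟨-, hneg⟩
  obtain ⟨b, hb⟩ := h _ hneg
  cases hb

lemma atomPart_mono {X Y : Set Lit} (h : X ⊆ Y) : atomPart X ⊆ atomPart Y :=
  fun _ hl => ⟨h hl.1, hl.2⟩

lemma pos_mem_atomPart {Z : Set Lit} {a : ℕ} : Lit.pos a ∈ atomPart Z ↔ Lit.pos a ∈ Z :=
  ⟨fun h => h.1, fun h => ⟨h, a, rfl⟩⟩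

def WRuleNegFree (r : WRule) : Prop :=
  (∀ p ∈ r.head.S, ∃ a : ℕ, reLit p.1 = Lit.pos a) ∧
    ∀ C ∈ r.body, ∀ p ∈ C.S, ∃ a : ℕ, reLit p.1 = Lit.pos a

section AtomPart

variable (Z : Set Lit)

lemma satRE_atomPart {e : RElem} (h : ∃ a, reLit e = Lit.pos a) :
    SatRE (atomPart Z) e ↔ SatRE Z e := by
  obtain ⟨a, ha⟩ := h
  cases e <;> simp only [reLit] at ha <;> subst ha
  exacts [pos_mem_atomPart, not_congr pos_mem_atomPart]

lemma wval_atomPart {S : Multiset (RElem × ℝ)} (h : ∀ p ∈ S, ∃ a, reLit p.1 = Lit.pos a) :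
    wval (atomPart Z) S = wval Z S := by
  unfold wval
  rw [Multiset.filter_congr fun p hp => satRE_atomPart Z (h p hp)]

lemma satWC_atomPart {C : WC} (h : ∀ p ∈ C.S, ∃ a, reLit p.1 = Lit.pos a) :
    SatWC (atomPart Z) C ↔ SatWC Z C := by
  rw [SatWC, SatWC, wval_atomPart Z h]

lemma redLS_atomPart {C : WC} (h : ∀ p ∈ C.S, ∃ a, reLit p.1 = Lit.pos a) :
    RedLS (atomPart Z) C = RedLS Z C := by
  rw [RedLS, RedLS, wval_atomPart Z fun p hp => h p (Multiset.mem_filter.mp hp).1]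

lemma satWProg_atomPart {P : WProg} (h : ∀ r ∈ P, WRuleNegFree r) :
    SatWProg (atomPart Z) P ↔ SatWProg Z P := by
  refine forall₂_congr fun r hr => ?_
  rw [SatWRule, SatWRule, satWC_atomPart Z (h r hr).1,
    forall₂_congr fun C hC => satWC_atomPart Z ((h r hr).2 C hC)]

lemma wReductRule_atomPart {r : WRule} (h : WRuleNegFree r) :
    WReductRule (atomPart Z) r = WReductRule Z r := by
  have hub : (∀ C ∈ r.body, (wval (atomPart Z) C.S : EReal) ≤ C.ub) ↔
      ∀ C ∈ r.body, (wval Z C.S : EReal) ≤ C.ub :=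
    forall₂_congr fun C hC => by rw [wval_atomPart Z (h.2 C hC)]
  have hbody : r.body.map (RedLS (atomPart Z)) = r.body.map (RedLS Z) :=
    List.map_congr_left fun C hC => redLS_atomPart Z (h.2 C hC)
  ext r'
  simp only [WReductRule, Set.mem_ofPred_eq, hub, hbody]
  refine exists_congr fun l => and_congr_right fun ⟨w, hw⟩ => ?_
  obtain ⟨a, ha⟩ := h.1 _ hw
  simp only [reLit] at ha
  rw [ha, pos_mem_atomPart]

lemma wReductProg_atomPart {P : WProg} (h : WProgNegFree P) :
    WReductProg (atomPart Z) P = WReductProg Z P := by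
  ext r'
  exact exists_congr fun r => and_congr_right fun hr => by rw [wReductRule_atomPart Z (h r hr)]

lemma wRuleNegFree_of_mem_wReductProg {P : WProg} (h : WProgNegFree P) :
    ∀ r' ∈ WReductProg Z P, WRuleNegFree r' := by
  rintro r' ⟨r, hr, l, ⟨w, hw⟩, -, -, rfl⟩
  refine ⟨?_, ?_⟩
  · intro p hp
    rw [litWC, Multiset.mem_singleton] at hp
    subst hp
    exact (h r hr).1 (RElem.pos l, w) hw
  · intro C hC p hp
    obtain ⟨C₀, hC₀, rfl⟩ := List.mem_map.mp hC
    exact (h r hr).2 C₀ hC₀ p (Multiset.mem_filter.mp hp).1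

end AtomPart

lemma seModelW_iff_atomPart {P : WProg} (h : WProgNegFree P) (X Y : Set Lit) :
    SEModelW P X Y ↔
      Consistent X ∧ Consistent Y ∧ X ⊆ Y ∧ SEModelW P (atomPart X) (atomPart Y) := by
  simp only [SEModelW, satWProg_atomPart _ h, wReductProg_atomPart _ h,
    satWProg_atomPart _ (wRuleNegFree_of_mem_wReductProg Y h),
    (atomsOnly_atomPart X).consistent, (atomsOnly_atomPart Y).consistent, true_and]
  exact ⟨fun ⟨hX, hY, hXY, hP⟩ => ⟨hX, hY, hXY, atomPart_mono hXY, hP⟩,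
    fun ⟨hX, hY, hXY, _, hP⟩ => ⟨hX, hY, hXY, hP⟩⟩

theorem stmt14_general (P Q : WProg)
    (hPnf : WProgNegFree P) (hQnf : WProgNegFree Q) :
    StrongEqW P Q ↔
      ∀ X Y : Set Lit, AtomsOnly X → AtomsOnly Y →
        (SEModelW P X Y ↔ SEModelW Q X Y) := by
  rw [strongEqW_iff_seModelW_iff]
  refine ⟨fun h X Y _ _ => h X Y, fun h X Y => ?_⟩
  rw [seModelW_iff_atomPart hPnf, seModelW_iff_atomPart hQnf,
    h _ _ (atomsOnly_atomPart X) (atomsOnly_atomPart Y)]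

/-- ¬-free weight constraint programs are strongly equivalent iff they
have the same positive SE-models. -/
theorem stmt14 (P Q : WProg) (hP : HeadPos P) (hQ : HeadPos Q)
    (hPnf : WProgNegFree P) (hQnf : WProgNegFree Q) :
    StrongEqW P Q ↔
      ∀ X Y : Set Lit, AtomsOnly X → AtomsOnly Y →
        (SEModelW P X Y ↔ SEModelW Q X Y) :=
  stmt14_general P Q hPnf hQnf
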